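/- Let L > 0, T > 0, and let V̂ : ℝ³ → ℝ satisfy 𝔟 := sup_{k∈ℤ³} |V̂(2πk/L)| < ∞. Let α : [0,T] → (ℤ³ → ℂ) satisfy the Duhamel form of the momentum-space Hartree equation, assume that for each n ∈ ℤ³ the map t ↦ α(t)(n) is continuous, and that S(t) := Σ_{n∈ℤ³} |α(t)(n)| is finite for each t and continuous in t, with S(0) > 0. Then for every t ∈ [0,T] with 2·S(0)²·𝔟·t < 1 one has S(t) ≤ S(0) / √(1 − 2·S(0)²·𝔟·t). -/

import Mathlib

open scoped BigOperators
open MeasureTheory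

noncomputable section

/-- Squared Euclidean norm of a lattice point `n ∈ ℤ³`. -/
def znormSq (n : Fin 3 → ℤ) : ℝ := ∑ i, ((n i : ℝ)) ^ 2

/-- Autocorrelation `β(k) = Σ_m conj(α(m))·α(m+k)` of a family `α : ℤ³ → ℂ`. -/
def autocorr (a : (Fin 3 → ℤ) → ℂ) (k : Fin 3 → ℤ) : ℂ :=
  ∑' m, (starRingEnd ℂ) (a m) * a (m + k)

/-- The sampled Fourier transform of the potential at momentum `2πk/L`. -/
def Vk (L : ℝ) (Vhat : (Fin 3 → ℝ) → ℝ) (k : Fin 3 → ℤ) : ℝ :=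
  Vhat fun i => 2 * Real.pi * (k i : ℝ) / L

/-- Free propagator `e^{−4π²i|n|²t/L²}` in momentum space. -/
def freeProp (L : ℝ) (n : Fin 3 → ℤ) (t : ℝ) : ℂ :=
  Complex.exp (-(4 * (Real.pi : ℂ) ^ 2 * Complex.I * ((znormSq n : ℝ) : ℂ) * (t : ℂ)
    / ((L : ℂ)) ^ 2))

/-- The interaction term `Σ_k α(n−k)·V̂(2πk/L)·β(k)`. -/
def hartreeSum (L : ℝ) (Vhat : (Fin 3 → ℝ) → ℝ) (a : (Fin 3 → ℤ) → ℂ)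
    (n : Fin 3 → ℤ) : ℂ :=
  ∑' k, a (n - k) * (Vk L Vhat k : ℂ) * autocorr a k

/-- `α` satisfies the Duhamel (mild) form of the momentum-space Hartree equation
on `[0,T]`. -/
def DuhamelSol (L T : ℝ) (Vhat : (Fin 3 → ℝ) → ℝ)
    (α : ℝ → (Fin 3 → ℤ) → ℂ) : Prop :=
  ∀ n : Fin 3 → ℤ, ∀ t ∈ Set.Icc (0 : ℝ) T,
    α t n = freeProp L n t * α 0 n
      - Complex.I * ∫ s in (0 : ℝ)..t, freeProp L n (t - s) * hartreeSum L Vhat (α s) n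



/-! ### Auxiliary lemmas -/

lemma abs_freeProp (L : ℝ) (n : Fin 3 → ℤ) (t : ℝ) : ‖freeProp L n t‖ = 1 := by
  have : freeProp L n t
      = Complex.exp (((-(4 * Real.pi ^ 2 * znormSq n * t / L ^ 2) : ℝ) : ℂ) * Complex.I) := by
    unfold freeProp
    push_cast
    ring_nf
  rw [this, Complex.norm_exp_ofReal_mul_I]

lemma aux_aemeasurable_tsum {ι : Type*} [Countable ι] {μ : Measure ℝ} {f : ι → ℝ → ℂ}
    (hf : ∀ i, AEMeasurable (f i) μ) (hs : ∀ᵐ x ∂μ, Summable fun i => f i x) :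
    AEMeasurable (fun x => ∑' i, f i x) μ := by
  refine aemeasurable_of_tendsto_metrizable_ae (Filter.atTop : Filter (Finset ι))
    (fun F => Finset.aemeasurable_fun_sum F fun i _ => hf i) ?_
  filter_upwards [hs] with x hx using hx.hasSum

lemma hasDerivAt_sqrtBound (A c x : ℝ) (hu : 0 < 1 - c * x) :
    HasDerivAt (fun y => A / Real.sqrt (1 - c * y))
      (A * c / (2 * Real.sqrt (1 - c * x) ^ 3)) x := by
  have hs0 : 0 < Real.sqrt (1 - c * x) := Real.sqrt_pos.mpr hu
  have h1 : HasDerivAt (fun y : ℝ => 1 - c * y) (-c) x := by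
    simpa using ((hasDerivAt_id x).const_mul c).const_sub 1
  have h2 : HasDerivAt (fun y => Real.sqrt (1 - c * y))
      (1 / (2 * Real.sqrt (1 - c * x)) * (-c)) x :=
    (Real.hasDerivAt_sqrt (ne_of_gt hu)).comp x h1
  have h3 := (hasDerivAt_const x A).div h2 (ne_of_gt hs0)
  refine h3.congr_deriv ?_
  symm
  have hs0' : Real.sqrt (1 - c * x) ≠ 0 := ne_of_gt hs0
  have hsq : Real.sqrt (1 - c * x) ^ 2 = 1 - c * x := Real.sq_sqrt hu.le
  rw [div_eq_div_iff (by positivity) (by positivity)]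
  field_simp
  ring

namespace Stx

abbrev G := Fin 3 → ℤ

variable {a : G → ℂ}

/-- `M a k = tsum_m |a m| * |a (m+k)|`. -/
def M (a : G → ℂ) (k : G) : ℝ := ∑' m, ‖a m‖ * ‖a (m + k)‖

lemma abs_le_S (ha : Summable fun n => ‖a n‖) (n : G) :
    ‖a n‖ ≤ ∑' n, ‖a n‖ :=
  ha.le_tsum n fun _ _ => norm_nonneg _

lemma S_nonneg (a : G → ℂ) : 0 ≤ ∑' n, ‖a n‖ :=
  tsum_nonneg fun _ => norm_nonneg _

lemma summable_shift (ha : Summable fun n => ‖a n‖) (k : G) :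
    Summable fun m => ‖a m‖ * ‖a (m + k)‖ := by
  refine Summable.of_nonneg_of_le
    (fun m => mul_nonneg (norm_nonneg _) (norm_nonneg _))
    (fun m => ?_) (ha.mul_right (∑' n, ‖a n‖))
  exact mul_le_mul_of_nonneg_left (abs_le_S ha _) (norm_nonneg _)

lemma M_nonneg (a : G → ℂ) (k : G) : 0 ≤ M a k :=
  tsum_nonneg fun _ => mul_nonneg (norm_nonneg _) (norm_nonneg _)

lemma summable_autocorr (ha : Summable fun n => ‖a n‖) (k : G) :
    Summable fun m => (starRingEnd ℂ) (a m) * a (m + k) := by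
  refine Summable.of_norm ?_
  have := summable_shift ha k
  refine this.congr fun m => ?_
  simp [map_mul]

lemma abs_autocorr_le (ha : Summable fun n => ‖a n‖) (k : G) :
    ‖autocorr a k‖ ≤ M a k := by
  refine le_trans (norm_tsum_le_tsum_norm ?_) ?_
  · refine (summable_shift ha k).congr fun m => ?_
    simp [map_mul]
  · refine le_of_eq (tsum_congr fun m => ?_)
    simp [map_mul]

lemma summable_pair (ha : Summable fun n => ‖a n‖) :
    Summable fun p : G × G => ‖a p.1‖ * ‖a (p.1 + p.2)‖ := by
  have h0 : Summable fun p : G × G => ‖a p.1‖ * ‖a p.2‖ :=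
    ha.mul_of_nonneg ha (fun _ => norm_nonneg _) fun _ => norm_nonneg _
  have h1 := (Equiv.prodShear (Equiv.refl G) fun m => Equiv.addLeft m).summable_iff.mpr h0
  exact h1.congr fun p => by simp [Equiv.prodShear, Equiv.addLeft]

lemma summable_pair_swap (ha : Summable fun n => ‖a n‖) :
    Summable fun p : G × G => ‖a p.2‖ * ‖a (p.2 + p.1)‖ :=
  (Equiv.prodComm G G).summable_iff.mpr (summable_pair ha)

lemma summable_M (ha : Summable fun n => ‖a n‖) : Summable (M a) := by
  have := (summable_prod_of_nonneg
    (f := fun p : G × G => ‖a p.2‖ * ‖a (p.2 + p.1)‖)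
    (fun p => mul_nonneg (norm_nonneg _) (norm_nonneg _))).mp
    (summable_pair_swap ha)
  exact this.2

lemma tsum_shift (a : G → ℂ) (m : G) :
    ∑' k, ‖a (m + k)‖ = ∑' n, ‖a n‖ :=
  (Equiv.addLeft m).tsum_eq fun n => ‖a n‖

lemma tsum_sub_shift (a : G → ℂ) (k : G) :
    ∑' n, ‖a (n - k)‖ = ∑' n, ‖a n‖ :=
  (Equiv.subRight k).tsum_eq fun n => ‖a n‖

lemma tsum_M (ha : Summable fun n => ‖a n‖) :
    ∑' k, M a k = (∑' n, ‖a n‖) ^ 2 := by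
  have hcomm := Summable.tsum_comm (f := fun m k => ‖a m‖ * ‖a (m + k)‖)
    (summable_pair ha)
  unfold M
  rw [hcomm]
  have : ∀ m : G, ∑' k, ‖a m‖ * ‖a (m + k)‖
      = ‖a m‖ * ∑' n, ‖a n‖ := by
    intro m
    rw [tsum_mul_left, tsum_shift a m]
  rw [tsum_congr this, tsum_mul_right]
  ring

def shearSub : G × G ≃ G × G :=
  ⟨fun p => (p.1 - p.2, p.2), fun p => (p.1 + p.2, p.2), fun p => by simp, fun p => by simp⟩

@[simp] lemma shearSub_apply (p : G × G) : shearSub p = (p.1 - p.2, p.2) := rfl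

/-- summability of the pair family `(n,k) -> |a (n-k)| * M a k`. -/
lemma summable_pairG (ha : Summable fun n => ‖a n‖) :
    Summable fun p : G × G => ‖a (p.1 - p.2)‖ * M a p.2 := by
  have h0 : Summable fun p : G × G => ‖a p.1‖ * M a p.2 :=
    ha.mul_of_nonneg (summable_M ha) (fun _ => norm_nonneg _) fun k => M_nonneg a k
  have h1 := shearSub.summable_iff.mpr h0
  exact h1.congr fun p => by simp

lemma summable_G1 (ha : Summable fun n => ‖a n‖) (n : G) :
    Summable fun k => ‖a (n - k)‖ * M a k := by
  refine Summable.of_nonneg_of_le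
    (fun k => mul_nonneg (norm_nonneg _) (M_nonneg a k)) (fun k => ?_)
    ((summable_M ha).mul_left (∑' n, ‖a n‖))
  exact mul_le_mul_of_nonneg_right (abs_le_S ha _) (M_nonneg a k)

lemma summable_G1_outer (ha : Summable fun n => ‖a n‖) :
    Summable fun n => ∑' k, ‖a (n - k)‖ * M a k := by
  have := (summable_prod_of_nonneg
    (f := fun p : G × G => ‖a (p.1 - p.2)‖ * M a p.2)
    (fun p => mul_nonneg (norm_nonneg _) (M_nonneg a _))).mp (summable_pairG ha)
  exact this.2

lemma tsum_G1 (ha : Summable fun n => ‖a n‖) :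
    ∑' n, ∑' k, ‖a (n - k)‖ * M a k = (∑' n, ‖a n‖) ^ 3 := by
  have hpair : Summable (Function.uncurry fun k n => ‖a (n - k)‖ * M a k) := by
    have h1 := (Equiv.prodComm G G).summable_iff.mpr (summable_pairG ha)
    exact h1.congr fun p => by simp [Function.uncurry]
  have hcomm : (∑' (n : G) (k : G), ‖a (n - k)‖ * M a k)
      = ∑' (k : G) (n : G), ‖a (n - k)‖ * M a k := Summable.tsum_comm hpair
  rw [hcomm]
  have : ∀ k : G, ∑' n, ‖a (n - k)‖ * M a k
      = (∑' n, ‖a n‖) * M a k := by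
    intro k
    rw [tsum_mul_right, tsum_sub_shift a k]
  rw [tsum_congr this, tsum_mul_left, tsum_M ha]
  ring

variable {L b : ℝ} {Vhat : (Fin 3 → ℝ) → ℝ}

lemma hartree_term_norm_le (hbV : ∀ k, |Vk L Vhat k| ≤ b)
    (ha : Summable fun n => ‖a n‖) (n k : G) :
    ‖a (n - k) * (Vk L Vhat k : ℂ) * autocorr a k‖
      ≤ b * (‖a (n - k)‖ * M a k) := by
  have hb0 : 0 ≤ b := le_trans (abs_nonneg _) (hbV 0)
  calc ‖a (n - k) * (Vk L Vhat k : ℂ) * autocorr a k‖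
      = ‖a (n - k)‖ * |Vk L Vhat k| * ‖autocorr a k‖ := by
        simp [map_mul, Complex.norm_real]
    _ ≤ ‖a (n - k)‖ * b * M a k := by
        refine mul_le_mul (mul_le_mul_of_nonneg_left (hbV k) (norm_nonneg _))
          (abs_autocorr_le ha k) (norm_nonneg _)
          (mul_nonneg (norm_nonneg _) hb0)
    _ = b * (‖a (n - k)‖ * M a k) := by ring

lemma summable_hartree_norm (hbV : ∀ k, |Vk L Vhat k| ≤ b)
    (ha : Summable fun n => ‖a n‖) (n : G) :
    Summable fun k => ‖a (n - k) * (Vk L Vhat k : ℂ) * autocorr a k‖ :=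
  Summable.of_nonneg_of_le (fun k => norm_nonneg _) (fun k => hartree_term_norm_le hbV ha n k)
    ((summable_G1 ha n).mul_left b)

lemma summable_hartree_term (hbV : ∀ k, |Vk L Vhat k| ≤ b)
    (ha : Summable fun n => ‖a n‖) (n : G) :
    Summable fun k => a (n - k) * (Vk L Vhat k : ℂ) * autocorr a k :=
  Summable.of_norm (summable_hartree_norm hbV ha n)

lemma abs_hartree_le (hbV : ∀ k, |Vk L Vhat k| ≤ b)
    (ha : Summable fun n => ‖a n‖) (n : G) :
    ‖hartreeSum L Vhat a n‖
      ≤ b * ∑' k, ‖a (n - k)‖ * M a k := by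
  refine le_trans (norm_tsum_le_tsum_norm (summable_hartree_norm hbV ha n)) ?_
  rw [← tsum_mul_left]
  exact Summable.tsum_le_tsum (fun k => hartree_term_norm_le hbV ha n k)
    (summable_hartree_norm hbV ha n) ((summable_G1 ha n).mul_left b)

lemma key_bound (hbV : ∀ k, |Vk L Vhat k| ≤ b)
    (ha : Summable fun n => ‖a n‖) (F : Finset G) :
    ∑ n ∈ F, ‖hartreeSum L Vhat a n‖
      ≤ b * (∑' n, ‖a n‖) ^ 3 := by
  have hb0 : 0 ≤ b := le_trans (abs_nonneg _) (hbV 0)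
  calc ∑ n ∈ F, ‖hartreeSum L Vhat a n‖
      ≤ ∑ n ∈ F, b * ∑' k, ‖a (n - k)‖ * M a k :=
        Finset.sum_le_sum fun n _ => abs_hartree_le hbV ha n
    _ = b * ∑ n ∈ F, ∑' k, ‖a (n - k)‖ * M a k := by rw [Finset.mul_sum]
    _ ≤ b * ∑' n, ∑' k, ‖a (n - k)‖ * M a k := by
        refine mul_le_mul_of_nonneg_left ?_ hb0
        exact Summable.sum_le_tsum F (fun n _ => tsum_nonneg fun k =>
          mul_nonneg (norm_nonneg _) (M_nonneg a k)) (summable_G1_outer ha)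
    _ = b * (∑' n, ‖a n‖) ^ 3 := by rw [tsum_G1 ha]

end Stx

/-- for a Duhamel solution of the momentum-space Hartree equation with
continuous coefficients and continuous finite `ℓ¹`-norm `S(t)`, one has
`S(t) ≤ S(0)/√(1 − 2S(0)²𝔟t)` whenever `2S(0)²𝔟t < 1`, where
`𝔟 = sup_{k∈ℤ³} |V̂(2πk/L)|`. -/
theorem stmt11 (L T b : ℝ) (hL : 0 < L) (hT : 0 < T)
    (Vhat : (Fin 3 → ℝ) → ℝ)
    (hb : IsLUB (Set.range fun k : Fin 3 → ℤ => |Vk L Vhat k|) b)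
    (α : ℝ → (Fin 3 → ℤ) → ℂ)
    (hduh : DuhamelSol L T Vhat α)
    (hcont : ∀ n : Fin 3 → ℤ, ContinuousOn (fun t => α t n) (Set.Icc 0 T))
    (hsum : ∀ t ∈ Set.Icc (0 : ℝ) T, Summable fun n => ‖α t n‖)
    (hScont : ContinuousOn (fun t => ∑' n, ‖α t n‖) (Set.Icc 0 T))
    (hS0 : 0 < ∑' n, ‖α 0 n‖) :
    ∀ t ∈ Set.Icc (0 : ℝ) T,
      2 * (∑' n, ‖α 0 n‖) ^ 2 * b * t < 1 →
        ∑' n, ‖α t n‖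
          ≤ (∑' n, ‖α 0 n‖) /
              Real.sqrt (1 - 2 * (∑' n, ‖α 0 n‖) ^ 2 * b * t) := by
  intro t ht hlt
  obtain ⟨ht0, htT⟩ := ht
  set A := ∑' n, ‖α 0 n‖ with hA
  have hbV : ∀ k, |Vk L Vhat k| ≤ b := fun k => hb.1 ⟨k, rfl⟩
  have hb0 : 0 ≤ b := (abs_nonneg _).trans (hbV 0)
  have h0T : (0 : ℝ) ∈ Set.Icc (0 : ℝ) T := ⟨le_refl 0, hT.le⟩
  -- continuity and integrability of the comparison integrand
  have hgc : ContinuousOn (fun s => b * (∑' n, ‖α s n‖) ^ 3) (Set.Icc 0 T) :=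
    continuousOn_const.mul (hScont.pow 3)
  have hgint : IntegrableOn (fun s => b * (∑' n, ‖α s n‖) ^ 3)
      (Set.Icc 0 T) volume := hgc.integrableOn_Icc
  -- Main integral inequality
  have claim : ∀ u ∈ Set.Icc (0:ℝ) t, (∑' n, ‖α u n‖)
      ≤ A + ∫ s in (0:ℝ)..u, b * (∑' n, ‖α s n‖) ^ 3 := by
    intro u hu
    obtain ⟨hu0, hut⟩ := hu
    have huT : u ≤ T := le_trans hut htT
    have huIccT : u ∈ Set.Icc (0:ℝ) T := ⟨hu0, huT⟩
    have hsub : Set.Ioc (0:ℝ) u ⊆ Set.Icc (0:ℝ) T := fun s hs => ⟨hs.1.le, hs.2.trans huT⟩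
    set μ := volume.restrict (Set.Ioc (0:ℝ) u) with hμ
    have hmem : ∀ᵐ s ∂μ, s ∈ Set.Ioc (0:ℝ) u := ae_restrict_mem measurableSet_Ioc
    have hαm : ∀ m, AEMeasurable (fun s => α s m) μ := fun m =>
      ((hcont m).aemeasurable measurableSet_Icc).mono_measure
        (Measure.restrict_mono hsub le_rfl)
    have hβm : ∀ k, AEMeasurable (fun s => autocorr (α s) k) μ := by
      intro k
      have : AEMeasurable (fun s => ∑' m, (starRingEnd ℂ) (α s m) * α s (m + k)) μ := by
        refine aux_aemeasurable_tsum
          (fun m => (Complex.continuous_conj.measurable.comp_aemeasurable (hαm m)).mul (hαm (m + k))) ?_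
        filter_upwards [hmem] with s hs
        exact Stx.summable_autocorr (hsum s (hsub hs)) k
      exact this
    have hHm : ∀ n, AEMeasurable (fun s => hartreeSum L Vhat (α s) n) μ := by
      intro n
      have : AEMeasurable
          (fun s => ∑' k, α s (n - k) * (Vk L Vhat k : ℂ) * autocorr (α s) k) μ := by
        refine aux_aemeasurable_tsum
          (fun k => ((hαm (n - k)).mul_const _).mul (hβm k)) ?_
        filter_upwards [hmem] with s hs
        exact Stx.summable_hartree_term hbV (hsum s (hsub hs)) n
      exact this
    have hptw : ∀ (F : Finset (Fin 3 → ℤ)), ∀ᵐ s ∂μ,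
        (∑ n ∈ F, ‖hartreeSum L Vhat (α s) n‖)
          ≤ b * (∑' n, ‖α s n‖) ^ 3 := by
      intro F
      filter_upwards [hmem] with s hs
      have h := Stx.key_bound hbV (hsum s (hsub hs)) F
      simpa using h
    have hgint' : IntegrableOn (fun s => b * (∑' n, ‖α s n‖) ^ 3)
        (Set.Ioc (0:ℝ) u) volume := hgint.mono_set hsub
    have hHint : ∀ n, IntervalIntegrable (fun s => ‖hartreeSum L Vhat (α s) n‖)
        volume 0 u := by
      intro n
      rw [intervalIntegrable_iff_integrableOn_Ioc_of_le hu0]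
      refine Integrable.mono' hgint' ((hHm n).norm).aestronglyMeasurable ?_
      filter_upwards [hptw {n}] with s hs
      simpa using hs
    have hn : ∀ n, ‖α u n‖ ≤ ‖α 0 n‖
        + ∫ s in (0:ℝ)..u, ‖hartreeSum L Vhat (α s) n‖ := by
      intro n
      rw [hduh n u huIccT]
      have e1 : ‖freeProp L n u * α 0 n‖ = ‖α 0 n‖ := by
        rw [norm_mul, abs_freeProp, one_mul]
      calc ‖freeProp L n u * α 0 n - Complex.I *
            ∫ s in (0:ℝ)..u, freeProp L n (u - s) * hartreeSum L Vhat (α s) n‖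
          ≤ ‖freeProp L n u * α 0 n‖ + ‖Complex.I *
            ∫ s in (0:ℝ)..u, freeProp L n (u - s) * hartreeSum L Vhat (α s) n‖ := by
            exact norm_sub_le _ _
        _ = ‖α 0 n‖
            + ‖∫ s in (0:ℝ)..u, freeProp L n (u - s) * hartreeSum L Vhat (α s) n‖ := by
            rw [e1, norm_mul, Complex.norm_I, one_mul]
        _ ≤ ‖α 0 n‖
            + ∫ s in (0:ℝ)..u, ‖freeProp L n (u - s) * hartreeSum L Vhat (α s) n‖ := by
            refine add_le_add_right (intervalIntegral.norm_integral_le_integral_norm hu0) _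
        _ = ‖α 0 n‖ + ∫ s in (0:ℝ)..u, ‖hartreeSum L Vhat (α s) n‖ := by
            congr 1
            refine intervalIntegral.integral_congr fun s _ => ?_
            rw [norm_mul, abs_freeProp, one_mul]
    refine Summable.tsum_le_of_sum_le (hsum u huIccT) ?_
    intro F
    calc ∑ n ∈ F, ‖α u n‖
        ≤ ∑ n ∈ F, (‖α 0 n‖
            + ∫ s in (0:ℝ)..u, ‖hartreeSum L Vhat (α s) n‖) :=
          Finset.sum_le_sum fun n _ => hn n
      _ = ∑ n ∈ F, ‖α 0 n‖
            + ∑ n ∈ F, ∫ s in (0:ℝ)..u, ‖hartreeSum L Vhat (α s) n‖ :=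
          Finset.sum_add_distrib
      _ ≤ A + ∫ s in (0:ℝ)..u, ∑ n ∈ F, ‖hartreeSum L Vhat (α s) n‖ := by
          refine add_le_add
            (Summable.sum_le_tsum F (fun n _ => norm_nonneg _) (hsum 0 h0T)) ?_
          rw [intervalIntegral.integral_finset_sum (fun n _ => hHint n)]
      _ ≤ A + ∫ s in (0:ℝ)..u, b * (∑' n, ‖α s n‖) ^ 3 := by
          refine add_le_add_right ?_ A
          rw [intervalIntegral.integral_of_le hu0, intervalIntegral.integral_of_le hu0]
          refine integral_mono_of_nonneg ?_ hgint' ?_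
          · filter_upwards with s using Finset.sum_nonneg fun n _ => norm_nonneg _
          · exact hptw F
  -- From here on: Gronwall-type comparison.
  rcases eq_or_lt_of_le ht0 with h0 | h0
  · rw [← h0]
    simp [hA]
  · set c0 := 2 * A ^ 2 * b with hc0
    have key : ∀ δ : ℝ, 0 < δ → (c0 + δ) * t < 1 →
        (∑' n, ‖α t n‖) ≤ A / Real.sqrt (1 - (c0 + δ) * t) := by
      intro δ hδ hδt
      set c := c0 + δ with hc
      have hc' : 0 < c := by
        have : 0 ≤ c0 := by positivity
        linarith
      have hu : ∀ x ∈ Set.Icc (0:ℝ) t, 0 < 1 - c * x := by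
        intro x hx
        have h1 : c * x ≤ c * t := mul_le_mul_of_nonneg_left hx.2 hc'.le
        linarith
      have hfc : ContinuousOn
          (fun x => A + ∫ s in (0:ℝ)..x, b * (∑' n, ‖α s n‖) ^ 3)
          (Set.Icc 0 t) := by
        refine continuousOn_const.add ?_
        have hint : IntegrableOn (fun s => b * (∑' n, ‖α s n‖) ^ 3)
            (Set.uIcc (0:ℝ) t) volume := by
          rw [Set.uIcc_of_le ht0]
          exact hgint.mono_set fun s hs => ⟨hs.1, hs.2.trans htT⟩
        have := intervalIntegral.continuousOn_primitive_interval hint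
        rw [Set.uIcc_of_le ht0] at this
        exact this
      have hf' : ∀ x ∈ Set.Ico (0:ℝ) t,
          HasDerivWithinAt
            (fun x => A + ∫ s in (0:ℝ)..x, b * (∑' n, ‖α s n‖) ^ 3)
            (b * (∑' n, ‖α x n‖) ^ 3) (Set.Ici x) x := by
        intro x hx
        have hxT : x < T := lt_of_lt_of_le hx.2 htT
        have hii : IntervalIntegrable (fun s => b * (∑' n, ‖α s n‖) ^ 3)
            volume 0 x := by
          rw [intervalIntegrable_iff_integrableOn_Ioc_of_le hx.1]
          exact hgint.mono_set fun s hs => ⟨hs.1.le, hs.2.trans (hx.2.le.trans htT)⟩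
        have hmeasAt : StronglyMeasurableAtFilter
            (fun s => b * (∑' n, ‖α s n‖) ^ 3) (nhdsWithin x (Set.Ioi x))
            volume := by
          refine ⟨Set.Icc 0 T, ?_, (hgc.aestronglyMeasurable measurableSet_Icc)⟩
          refine mem_nhdsWithin.2 ⟨Set.Iio T, isOpen_Iio, hxT, ?_⟩
          rintro y ⟨hy1, hy2⟩
          exact ⟨le_trans hx.1 (le_of_lt hy2), le_of_lt hy1⟩
        have hcw : ContinuousWithinAt
            (fun s => b * (∑' n, ‖α s n‖) ^ 3) (Set.Ioi x) x := by
          have h1 : ContinuousWithinAt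
              (fun s => b * (∑' n, ‖α s n‖) ^ 3) (Set.Icc 0 T) x :=
            hgc x ⟨hx.1, hxT.le⟩
          have h2 := h1.mono (show Set.Ioc x T ⊆ Set.Icc 0 T from
            fun y hy => ⟨le_trans hx.1 hy.1.le, hy.2⟩)
          exact Filter.Tendsto.mono_left h2
            (nhdsWithin_Ioc_eq_nhdsGT hxT).ge
        have hftc := intervalIntegral.integral_hasDerivWithinAt_right (s := Set.Ici x) (t := Set.Ioi x) hii hmeasAt hcw
        exact hftc.const_add A
      have hB' : ∀ x ∈ Set.Ico (0:ℝ) t,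
          HasDerivWithinAt (fun y => A / Real.sqrt (1 - c * y))
            (A * c / (2 * Real.sqrt (1 - c * x) ^ 3)) (Set.Ici x) x := fun x hx =>
        (hasDerivAt_sqrtBound A c x (hu x ⟨hx.1, hx.2.le⟩)).hasDerivWithinAt
      have hBc : ContinuousOn (fun y => A / Real.sqrt (1 - c * y)) (Set.Icc 0 t) :=
        fun x hx => ((hasDerivAt_sqrtBound A c x (hu x hx)).continuousAt).continuousWithinAt
      have hB0 : A + (∫ s in (0:ℝ)..(0:ℝ), b * (∑' n, ‖α s n‖) ^ 3)
          ≤ A / Real.sqrt (1 - c * 0) := by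
        simp
      have hbound : ∀ x ∈ Set.Ico (0:ℝ) t,
          (A + ∫ s in (0:ℝ)..x, b * (∑' n, ‖α s n‖) ^ 3)
            = A / Real.sqrt (1 - c * x) →
          b * (∑' n, ‖α x n‖) ^ 3
            < A * c / (2 * Real.sqrt (1 - c * x) ^ 3) := by
        intro x hx hfB
        have hux := hu x ⟨hx.1, hx.2.le⟩
        have hsx : 0 < Real.sqrt (1 - c * x) := Real.sqrt_pos.mpr hux
        have hSx : (∑' n, ‖α x n‖) ≤ A / Real.sqrt (1 - c * x) := by
          rw [← hfB]
          exact claim x ⟨hx.1, hx.2.le⟩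
        have hS0' : 0 ≤ ∑' n, ‖α x n‖ :=
          tsum_nonneg fun _ => norm_nonneg _
        have hcube : b * (∑' n, ‖α x n‖) ^ 3
            ≤ b * (A / Real.sqrt (1 - c * x)) ^ 3 := by
          refine mul_le_mul_of_nonneg_left (pow_le_pow_left₀ hS0' hSx 3) hb0
        refine lt_of_le_of_lt hcube ?_
        have h3 : (0:ℝ) < Real.sqrt (1 - c * x) ^ 3 := by positivity
        have hkey : b * A ^ 3 < A * c / 2 := by
          have hAc : A * c / 2 = A ^ 3 * b + A * δ / 2 := by
            rw [hc, hc0]; ring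
          nlinarith [hS0, hδ]
        rw [div_pow, ← mul_div_assoc, div_lt_div_iff₀ h3 (by positivity)]
        nlinarith [mul_pos (sub_pos.mpr hkey) h3]
      have hcmp := image_le_of_deriv_right_lt_deriv_boundary' hfc hf' hB0 hBc hB' hbound
      have hft := hcmp (Set.right_mem_Icc.mpr ht0)
      refine le_trans ?_ hft
      exact claim t (Set.right_mem_Icc.mpr ht0)
    -- pass to the limit δ → 0⁺
    have hc0t : c0 * t < 1 := hlt
    have hpos : 0 < 1 - c0 * t := by linarith
    have hlim : Filter.Tendsto (fun δ : ℝ => A / Real.sqrt (1 - (c0 + δ) * t))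
        (nhdsWithin 0 (Set.Ioi 0)) (nhds (A / Real.sqrt (1 - c0 * t))) := by
      have hcont0 : ContinuousAt (fun δ : ℝ => A / Real.sqrt (1 - (c0 + δ) * t)) 0 := by
        have h1 : ContinuousAt (fun δ : ℝ => 1 - (c0 + δ) * t) 0 := by fun_prop
        have h2 : ContinuousAt (fun δ : ℝ => Real.sqrt (1 - (c0 + δ) * t)) 0 :=
          Real.continuous_sqrt.continuousAt.comp h1
        refine ContinuousAt.div continuousAt_const h2 ?_
        simp only [add_zero]
        exact ne_of_gt (Real.sqrt_pos.mpr hpos)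
      have := hcont0.tendsto
      simp only [add_zero] at this
      exact this.mono_left nhdsWithin_le_nhds
    refine ge_of_tendsto hlim ?_
    have hmem : Set.Ioo (0:ℝ) ((1 - c0 * t) / t) ∈ nhdsWithin (0:ℝ) (Set.Ioi 0) :=
      Ioo_mem_nhdsGT_of_mem ⟨le_refl 0, by positivity⟩
    filter_upwards [hmem] with δ hδ
    refine key δ hδ.1 ?_
    have h1 : δ * t < 1 - c0 * t := (lt_div_iff₀ h0).mp hδ.2
    nlinarith [h1]

end
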